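/- For any n-node graph G with maximum degree Δ and arboricity α, any proper partial (Δ + (2+ε)α)-edge coloring of G leaving a single edge e uncolored can be extended to a proper (Δ + (2+ε)α)-edge coloring of all of G by changing the colors of at most O(log n / ε) edges (specifically, at most 2 + ⌈log_{1+ε} n⌉ edges). -/

import Mathlib

/-!
Peel the graph in rounds, each round deleting at once every vertex with at most
`D = ⌊(2 + ε)α⌋ + 1` neighbours among the survivors. A surviving set `T ⊆ S` has more than
`D |T|` adjacencies into the previous round `S`, but arboricity bounds them by `α (|T| + |S| - 2)`,
so every round shrinks by a factor `1 + ε` and the process stops after `⌈log_{1+ε} n⌉ + 1` rounds.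
With the level of a vertex the last round it survives, every vertex has at most `D` neighbours
at its own level or above.

To color an edge `uv` with `lvl u ≤ lvl v`, take a color missing at `v` and on the other upward
edges at `u`: at most `(Δ - 1) + (D - 1) < Δ + (2 + ε)α` colors are blocked. If the color is
used at `u`, then on a downward edge `uw`; move it to `uv` and recolor `uw` the same way. The
levels strictly decrease along this chain, so it changes at most `⌈log_{1+ε} n⌉ + 1` edges.
-/

open Finset

open scoped Classical in
/-- The edges of the subgraph of `G` induced by the vertex set `S`. -/
noncomputable def inducedEdges {V : Type*} [Fintype V] [DecidableEq V]
    (G : SimpleGraph V) [DecidableRel G.Adj] (S : Finset V) : Finset (Sym2 V) :=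
  G.edgeFinset.filter (fun e => ∀ x ∈ e, x ∈ S)

/-- `G` has arboricity at most `α`. -/
def ArboricityLE {V : Type*} [Fintype V] [DecidableEq V]
    (G : SimpleGraph V) [DecidableRel G.Adj] (α : ℝ) : Prop :=
  ∀ S : Finset V, 2 ≤ S.card → ((inducedEdges G S).card : ℝ) ≤ α * ((S.card : ℝ) - 1)

/-- `χ` is a proper partial edge coloring of `G`: any two distinct edges of `G`
sharing an endpoint do not receive the same color (uncolored edges get `none`). -/
def IsProperPartialEdgeColoring {V : Type*} (G : SimpleGraph V)
    (χ : Sym2 V → Option ℕ) : Prop :=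
  ∀ e ∈ G.edgeSet, ∀ f ∈ G.edgeSet, e ≠ f → (∃ x, x ∈ e ∧ x ∈ f) →
    ∀ c : ℕ, χ e = some c → χ f ≠ some c


section Arboricity

variable {V : Type*} [Fintype V] [DecidableEq V] {G : SimpleGraph V} [DecidableRel G.Adj]

lemma mem_inducedEdges {S : Finset V} {e : Sym2 V} :
    e ∈ inducedEdges G S ↔ e ∈ G.edgeSet ∧ ∀ x ∈ e, x ∈ S := by
  simp [inducedEdges]

lemma inducedEdges_mono {S T : Finset V} (hTS : T ⊆ S) :
    inducedEdges G T ⊆ inducedEdges G S := fun _ he =>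
  mem_inducedEdges.2 ⟨(mem_inducedEdges.1 he).1, fun x hx => hTS ((mem_inducedEdges.1 he).2 x hx)⟩

lemma one_le_of_arboricityLE {α : ℝ} (hG : ArboricityLE G α) {x y : V} (hxy : G.Adj x y) :
    1 ≤ α := by
  have hcard : #({x, y} : Finset V) = 2 := card_pair hxy.ne
  have hmem : s(x, y) ∈ inducedEdges G {x, y} :=
    mem_inducedEdges.2 ⟨hxy, fun z hz => by rcases Sym2.mem_iff.1 hz with rfl | rfl <;> simp⟩
  have h := hG {x, y} hcard.ge
  rw [hcard] at h
  have : (1 : ℝ) ≤ #(inducedEdges G {x, y}) := by exact_mod_cast card_pos.2 ⟨_, hmem⟩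
  norm_num at h
  linarith

lemma card_inducedEdges_le {α : ℝ} (hG : ArboricityLE G α) {S : Finset V} (hS : S.Nonempty) :
    (#(inducedEdges G S) : ℝ) ≤ α * (#S - 1) := by
  rcases (one_le_card.2 hS).eq_or_lt with h1 | h2
  · have : inducedEdges G S = ∅ := by
      refine eq_empty_of_forall_notMem fun e he => ?_
      induction e using Sym2.ind with
      | _ x y =>
        obtain ⟨hxy, hS'⟩ := mem_inducedEdges.1 he
        exact (one_lt_card.2 ⟨x, hS' x (Sym2.mem_mk_left x y), y, hS' y (Sym2.mem_mk_right x y),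
          G.ne_of_adj hxy⟩).ne h1
    simp [this, ← h1]
  · exact hG S h2

lemma card_neighborFinset_inter_eq {S : Finset V} {v : V} (hv : v ∈ S) :
    #(G.neighborFinset v ∩ S) = #{e ∈ inducedEdges G S | v ∈ e} := by
  refine card_nbij (fun w => s(v, w)) (fun w hw => ?_) (fun w _ w' _ h => Sym2.congr_right.1 h)
    (fun e he => ?_)
  · obtain ⟨hvw, hw⟩ := mem_inter.1 hw
    refine mem_filter.2 ⟨mem_inducedEdges.2 ⟨(G.mem_neighborFinset v w).1 hvw, ?_⟩,
      Sym2.mem_mk_left v w⟩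
    intro x hx
    rcases Sym2.mem_iff.1 hx with rfl | rfl <;> assumption
  · obtain ⟨he, hve⟩ := mem_filter.1 (mem_coe.1 he)
    obtain ⟨w, rfl⟩ := Sym2.mem_iff_exists.1 hve
    obtain ⟨hvw, hS⟩ := mem_inducedEdges.1 he
    exact ⟨w, mem_inter.2 ⟨(G.mem_neighborFinset v w).2 hvw, hS w (Sym2.mem_mk_right v w)⟩, rfl⟩

lemma card_filter_mem_le {S T : Finset V} {e : Sym2 V} (he : e ∈ inducedEdges G S) :
    #{v ∈ T | v ∈ e} ≤ 1 + if e ∈ inducedEdges G T then 1 else 0 := by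
  split_ifs with heT
  · induction e using Sym2.ind with
    | _ x y =>
      calc #{v ∈ T | v ∈ s(x, y)} ≤ #({x, y} : Finset V) :=
            card_le_card fun v hv => by simpa using (mem_filter.1 hv).2
        _ ≤ 1 + 1 := card_le_two
  · refine card_le_one.2 fun x hx y hy => by_contra fun hxy => heT ?_
    obtain ⟨hxT, hxe⟩ := mem_filter.1 hx
    obtain ⟨hyT, hye⟩ := mem_filter.1 hy
    rw [(Sym2.mem_and_mem_iff hxy).1 ⟨hxe, hye⟩] at he ⊢
    refine mem_inducedEdges.2 ⟨(mem_inducedEdges.1 he).1, fun z hz => ?_⟩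
    rcases Sym2.mem_iff.1 hz with rfl | rfl <;> assumption

lemma sum_card_neighborFinset_inter_le {S T : Finset V} (hTS : T ⊆ S) :
    ∑ v ∈ T, #(G.neighborFinset v ∩ S) ≤ #(inducedEdges G T) + #(inducedEdges G S) := by
  calc ∑ v ∈ T, #(G.neighborFinset v ∩ S)
      = ∑ v ∈ T, #{e ∈ inducedEdges G S | v ∈ e} :=
        sum_congr rfl fun v hv => card_neighborFinset_inter_eq (hTS hv)
    _ = ∑ e ∈ inducedEdges G S, #{v ∈ T | v ∈ e} :=
        sum_card_bipartiteAbove_eq_sum_card_bipartiteBelow (fun v e => v ∈ e)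
    _ ≤ ∑ e ∈ inducedEdges G S, (1 + if e ∈ inducedEdges G T then 1 else 0) :=
        sum_le_sum fun e he => card_filter_mem_le he
    _ = #(inducedEdges G T) + #(inducedEdges G S) := by
        rw [sum_add_distrib, sum_boole, filter_mem_eq_inter,
          inter_eq_right.2 (inducedEdges_mono hTS)]
        simp [add_comm]

end Arboricity

section Peeling

variable {V : Type*} [Fintype V] [DecidableEq V] (G : SimpleGraph V) [DecidableRel G.Adj]

def peel (D : ℕ) : ℕ → Finset V
  | 0 => univ
  | k + 1 => {v ∈ peel D k | D < #(G.neighborFinset v ∩ peel D k)}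

variable {G}

lemma peel_antitone (D : ℕ) : Antitone (peel G D) :=
  antitone_nat_of_succ_le fun _ => filter_subset _ _

/-- The level of `v` is the last round that `v` survives. -/
lemma exists_level_of_peel_eq_empty {D K : ℕ} (hK : peel G D K = ∅) :
    ∃ lvl : V → ℕ, (∀ v, lvl v < K) ∧ ∀ u, #{w ∈ G.neighborFinset u | lvl u ≤ lvl w} ≤ D := by
  let lvl v := Nat.findGreatest (v ∈ peel G D ·) K
  have mem_peel v : v ∈ peel G D (lvl v) :=
    Nat.findGreatest_spec (P := (v ∈ peel G D ·)) (Nat.zero_le K) (mem_univ v)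
  have lvl_lt v : lvl v < K :=
    (Nat.findGreatest_le K).lt_of_ne fun h => notMem_empty v (hK ▸ h ▸ mem_peel v)
  refine ⟨lvl, lvl_lt, fun u => ?_⟩
  have hu : ¬ D < #(G.neighborFinset u ∩ peel G D (lvl u)) := fun h =>
    Nat.findGreatest_is_greatest (Nat.lt_succ_self _) (lvl_lt u) (mem_filter.2 ⟨mem_peel u, h⟩)
  calc #{w ∈ G.neighborFinset u | lvl u ≤ lvl w}
      ≤ #(G.neighborFinset u ∩ peel G D (lvl u)) := card_le_card fun w hw => by
        obtain ⟨hw, hle⟩ := mem_filter.1 hw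
        exact mem_inter.2 ⟨hw, peel_antitone D hle (mem_peel w)⟩
    _ ≤ D := not_lt.1 hu

variable {α ε : ℝ} {D : ℕ}

lemma card_peel_succ_mul_le (hG : ArboricityLE G α) (hα : 0 < α) (hD : (2 + ε) * α ≤ D + 1)
    (k : ℕ) : (#(peel G D (k + 1)) : ℝ) * (1 + ε) ≤ #(peel G D k) := by
  set T := peel G D (k + 1)
  set S := peel G D k
  have hTS : T ⊆ S := peel_antitone D k.le_succ
  rcases T.eq_empty_or_nonempty with hT | hT
  · simp [hT]
  have hdeg : #T * (D + 1) ≤ #(inducedEdges G T) + #(inducedEdges G S) :=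
    calc #T * (D + 1) ≤ ∑ v ∈ T, #(G.neighborFinset v ∩ S) := by
          simpa [mul_comm] using card_nsmul_le_sum T _ (D + 1) fun v hv => (mem_filter.1 hv).2
      _ ≤ _ := sum_card_neighborFinset_inter_le hTS
  have hdeg' : (#T : ℝ) * (D + 1) ≤ α * (#T - 1) + α * (#S - 1) := by
    have := card_inducedEdges_le hG hT
    have := card_inducedEdges_le hG (hT.mono hTS)
    have : ((#T * (D + 1) : ℕ) : ℝ) ≤ ((#(inducedEdges G T) + #(inducedEdges G S) : ℕ) : ℝ) :=
      Nat.cast_le.2 hdeg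
    push_cast at this
    linarith
  have hT0 : (0 : ℝ) ≤ #T := Nat.cast_nonneg _
  refine le_of_mul_le_mul_left ?_ hα
  nlinarith [mul_le_mul_of_nonneg_left hD hT0]

lemma card_peel_mul_pow_le (hG : ArboricityLE G α) (hα : 0 < α) (hε : 0 < ε)
    (hD : (2 + ε) * α ≤ D + 1) (k : ℕ) :
    (#(peel G D k) : ℝ) * (1 + ε) ^ k ≤ Fintype.card V := by
  induction k with
  | zero => simp [peel]
  | succ k ih =>
    calc (#(peel G D (k + 1)) : ℝ) * (1 + ε) ^ (k + 1)
        = #(peel G D (k + 1)) * (1 + ε) * (1 + ε) ^ k := by ring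
      _ ≤ #(peel G D k) * (1 + ε) ^ k := by
        gcongr
        exact card_peel_succ_mul_le hG hα hD k
      _ ≤ _ := ih

lemma peel_eq_empty (hG : ArboricityLE G α) (hα : 0 < α) (hε : 0 < ε)
    (hD : (2 + ε) * α ≤ D + 1) :
    peel G D (⌈Real.logb (1 + ε) (Fintype.card V)⌉₊ + 1) = ∅ := by
  set m := ⌈Real.logb (1 + ε) (Fintype.card V)⌉₊
  have hpow : (Fintype.card V : ℝ) ≤ (1 + ε) ^ m := by
    rcases (Fintype.card V).eq_zero_or_pos with h0 | hpos
    · rw [h0, Nat.cast_zero]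
      positivity
    calc (Fintype.card V : ℝ) = (1 + ε) ^ Real.logb (1 + ε) (Fintype.card V) :=
          (Real.rpow_logb (by linarith) (by linarith) (by exact_mod_cast hpos)).symm
      _ ≤ (1 + ε) ^ (m : ℝ) := Real.rpow_le_rpow_of_exponent_le (by linarith) (Nat.le_ceil _)
      _ = (1 + ε) ^ m := Real.rpow_natCast _ m
  have hcard : #(peel G D m) ≤ 1 := by
    have h := (card_peel_mul_pow_le hG hα hε hD m).trans hpow
    exact_mod_cast (mul_le_iff_le_one_left (by positivity)).1 h
  refine eq_empty_of_forall_notMem fun v hv => ?_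
  obtain ⟨hvm, hdeg⟩ := mem_filter.1 hv
  have : G.neighborFinset v ∩ peel G D m ⊆ (peel G D m).erase v := fun w hw =>
    mem_erase.2 ⟨(G.ne_of_adj ((G.mem_neighborFinset v w).1 (mem_inter.1 hw).1)).symm,
      (mem_inter.1 hw).2⟩
  have := card_le_card this
  rw [card_erase_of_mem hvm] at this
  omega

end Peeling

section Recoloring

variable {V : Type*} {G : SimpleGraph V}

def ColorsIn (G : SimpleGraph V) (P : Finset ℕ) (χ : Sym2 V → Option ℕ) : Prop :=
  ∀ f ∈ G.edgeSet, ∀ c : ℕ, χ f = some c → c ∈ P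

lemma exists_eq_mk_of_mem_edgeSet {h : Sym2 V} (hh : h ∈ G.edgeSet) {x : V} (hx : x ∈ h) :
    ∃ w, G.Adj x w ∧ h = s(x, w) := by
  obtain ⟨w, rfl⟩ := Sym2.mem_iff_exists.1 hx
  exact ⟨w, hh, rfl⟩

variable [DecidableEq V]

lemma ColorsIn.update_none {P : Finset ℕ} {χ : Sym2 V → Option ℕ} (hχ : ColorsIn G P χ)
    (g : Sym2 V) : ColorsIn G P (Function.update χ g none) := by
  intro f hf c hc
  by_cases hfg : f = g
  · simp [hfg] at hc
  · exact hχ f hf c (by rwa [Function.update_of_ne hfg] at hc)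

lemma ColorsIn.update_some {P : Finset ℕ} {χ : Sym2 V → Option ℕ} (hχ : ColorsIn G P χ)
    (f : Sym2 V) {c : ℕ} (hc : c ∈ P) : ColorsIn G P (Function.update χ f (some c)) := by
  intro h hh d hd
  by_cases hhf : h = f
  · simp_all
  · exact hχ h hh d (by rwa [Function.update_of_ne hhf] at hd)

lemma IsProperPartialEdgeColoring.update_none {χ : Sym2 V → Option ℕ}
    (hχ : IsProperPartialEdgeColoring G χ) (g : Sym2 V) :
    IsProperPartialEdgeColoring G (Function.update χ g none) := by
  intro e₁ he₁ e₂ he₂ hne hshare c h₁ h₂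
  by_cases h₁g : e₁ = g
  · simp [h₁g] at h₁
  by_cases h₂g : e₂ = g
  · simp [h₂g] at h₂
  rw [Function.update_of_ne h₁g] at h₁
  rw [Function.update_of_ne h₂g] at h₂
  exact hχ e₁ he₁ e₂ he₂ hne hshare c h₁ h₂

lemma IsProperPartialEdgeColoring.update_mk {χ : Sym2 V → Option ℕ}
    (hχ : IsProperPartialEdgeColoring G χ) {u v : V} {c : ℕ}
    (hu : ∀ w, G.Adj u w → w ≠ v → χ s(u, w) ≠ some c)
    (hv : ∀ w, G.Adj v w → w ≠ u → χ s(v, w) ≠ some c) :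
    IsProperPartialEdgeColoring G (Function.update χ s(u, v) (some c)) := by
  have free : ∀ h ∈ G.edgeSet, h ≠ s(u, v) → ∀ x ∈ s(u, v), x ∈ h → χ h ≠ some c := by
    intro h hh hne x hx hxh
    obtain ⟨w, hxw, rfl⟩ := exists_eq_mk_of_mem_edgeSet hh hxh
    rcases Sym2.mem_iff.1 hx with rfl | rfl
    · exact hu w hxw fun hwv => hne (by rw [hwv])
    · exact hv w hxw fun hwu => hne (by rw [hwu, Sym2.eq_swap])
  intro e₁ he₁ e₂ he₂ hne ⟨x, hx₁, hx₂⟩ d h₁ h₂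
  by_cases h₁f : e₁ = s(u, v)
  · subst h₁f
    rw [Function.update_self, Option.some_inj] at h₁
    rw [Function.update_of_ne (Ne.symm hne), ← h₁] at h₂
    exact free e₂ he₂ (Ne.symm hne) x hx₁ hx₂ h₂
  by_cases h₂f : e₂ = s(u, v)
  · subst h₂f
    rw [Function.update_self, Option.some_inj] at h₂
    rw [Function.update_of_ne h₁f, ← h₂] at h₁
    exact free e₁ he₁ h₁f x hx₂ hx₁ h₁
  rw [Function.update_of_ne h₁f] at h₁
  rw [Function.update_of_ne h₂f] at h₂
  exact hχ e₁ he₁ e₂ he₂ hne ⟨x, hx₁, hx₂⟩ d h₁ h₂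

lemma IsProperPartialEdgeColoring.shift {χ : Sym2 V → Option ℕ}
    (hχ : IsProperPartialEdgeColoring G χ) {u v w : V} {c : ℕ} (huw : G.Adj u w)
    (hc : χ s(u, w) = some c)
    (hv : ∀ w', G.Adj v w' → w' ≠ u → χ s(v, w') ≠ some c) :
    IsProperPartialEdgeColoring G
      (Function.update (Function.update χ s(u, w) none) s(u, v) (some c)) := by
  refine (hχ.update_none _).update_mk (fun w' huw' hw'v => ?_) (fun w' hvw' hw'u => ?_)
  · by_cases hw' : w' = w
    · simp [hw']
    have hne : s(u, w') ≠ s(u, w) := fun h => hw' (Sym2.congr_right.1 h)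
    rw [Function.update_of_ne hne]
    exact fun h => hχ _ huw' _ huw hne ⟨u, Sym2.mem_mk_left u w', Sym2.mem_mk_left u w⟩ c h hc
  · rw [Function.update_apply]
    split_ifs
    · simp
    · exact hv w' hvw' hw'u

variable [Fintype V] [DecidableRel G.Adj]

def changedEdges (G : SimpleGraph V) [DecidableRel G.Adj] (χ χ' : Sym2 V → Option ℕ) :
    Finset (Sym2 V) :=
  {f ∈ G.edgeFinset | χ' f ≠ χ f}

lemma changedEdges_subset_insert {χ χ₁ χ' : Sym2 V → Option ℕ} {f : Sym2 V}
    (hχ₁ : ∀ h ∈ G.edgeSet, h ≠ f → χ₁ h = χ h ∨ χ₁ h = none)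
    (hχ' : ∀ h ∈ G.edgeSet, χ' h ≠ none) :
    changedEdges G χ χ' ⊆ insert f (changedEdges G χ₁ χ') := by
  intro h hh
  obtain ⟨hE, hne⟩ := mem_filter.1 hh
  refine mem_insert.2 (or_iff_not_imp_left.2 fun hf => mem_filter.2 ⟨hE, ?_⟩)
  rcases hχ₁ h (G.mem_edgeFinset.1 hE) hf with h₁ | h₁ <;> rw [h₁]
  exacts [hne, hχ' h (G.mem_edgeFinset.1 hE)]

variable (lvl : V → ℕ) {Δ D : ℕ} (hΔ : ∀ v, G.degree v ≤ Δ)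
  (hup : ∀ u, #{w ∈ G.neighborFinset u | lvl u ≤ lvl w} ≤ D)
  {P : Finset ℕ} (hP : Δ + D ≤ #P + 1)
include hΔ hup hP

lemma exists_free_color (χ : Sym2 V → Option ℕ) {u v : V} (huv : G.Adj u v)
    (hle : lvl u ≤ lvl v) :
    ∃ c ∈ P, (∀ w, G.Adj u w → w ≠ v → lvl u ≤ lvl w → χ s(u, w) ≠ some c) ∧
      ∀ w, G.Adj v w → w ≠ u → χ s(v, w) ≠ some c := by
  set A := ((G.neighborFinset v).erase u).image fun w => χ s(v, w)
  set B := ({w ∈ G.neighborFinset u | lvl u ≤ lvl w}.erase v).image fun w => χ s(u, w)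
  have hv : 1 ≤ G.degree v := G.degree_pos_iff_exists_adj v |>.2 ⟨u, huv.symm⟩
  have hu : 1 ≤ #{w ∈ G.neighborFinset u | lvl u ≤ lvl w} :=
    card_pos.2 ⟨v, mem_filter.2 ⟨(G.mem_neighborFinset u v).2 huv, hle⟩⟩
  have hA : #A ≤ G.degree v - 1 := card_image_le.trans_eq <| by
    rw [card_erase_of_mem ((G.mem_neighborFinset v u).2 huv.symm), G.card_neighborFinset_eq_degree]
  have hB : #B ≤ #{w ∈ G.neighborFinset u | lvl u ≤ lvl w} - 1 := card_image_le.trans_eq <| by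
    rw [card_erase_of_mem (mem_filter.2 ⟨(G.mem_neighborFinset u v).2 huv, hle⟩)]
  have hcard : #(A ∪ B) < #(P.image some) := by
    rw [card_image_of_injective _ (Option.some_injective ℕ)]
    have := card_union_le A B
    have := hΔ v
    have := hup u
    omega
  obtain ⟨_, hc, hcAB⟩ := exists_mem_notMem_of_card_lt_card hcard
  obtain ⟨c, hcP, rfl⟩ := mem_image.1 hc
  refine ⟨c, hcP, fun w huw hwv hlw h => hcAB (mem_union_right _ ?_),
    fun w hvw hwu h => hcAB (mem_union_left _ ?_)⟩
  · exact mem_image.2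
      ⟨w, mem_erase.2 ⟨hwv, mem_filter.2 ⟨(G.mem_neighborFinset u w).2 huw, hlw⟩⟩, h⟩
  · exact mem_image.2 ⟨w, mem_erase.2 ⟨hwu, (G.mem_neighborFinset v w).2 hvw⟩, h⟩

theorem exists_recoloring {χ : Sym2 V → Option ℕ} {u v : V} (huv : G.Adj u v)
    (hle : lvl u ≤ lvl v) (hχ : IsProperPartialEdgeColoring G χ)
    (hrest : ∀ h ∈ G.edgeSet, h ≠ s(u, v) → χ h ≠ none) (hpal : ColorsIn G P χ) :
    ∃ χ', IsProperPartialEdgeColoring G χ' ∧ (∀ h ∈ G.edgeSet, χ' h ≠ none) ∧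
      ColorsIn G P χ' ∧ #(changedEdges G χ χ') ≤ lvl u + 1 := by
  induction hk : lvl u using Nat.strong_induction_on generalizing χ u v with
  | _ k ih =>
  obtain ⟨c, hcP, hu, hv⟩ := exists_free_color lvl hΔ hup hP χ huv hle
  by_cases hconflict : ∃ w, G.Adj u w ∧ w ≠ v ∧ χ s(u, w) = some c
  · obtain ⟨w, huw, hwv, hw⟩ := hconflict
    have hlw : lvl w < k := hk ▸ lt_of_not_ge fun h => hu w huw hwv h hw
    obtain ⟨χ₁, hχ₁def⟩ : ∃ χ₁, χ₁ = Function.update (Function.update χ s(u, w) none) s(u, v)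
      (some c) := ⟨_, rfl⟩
    have hχ₁ : ∀ h, h ≠ s(u, v) → h ≠ s(u, w) → χ₁ h = χ h := fun h h₁ h₂ => by
      simp [hχ₁def, Function.update_of_ne h₁, Function.update_of_ne h₂]
    have hrest₁ : ∀ h ∈ G.edgeSet, h ≠ s(w, u) → χ₁ h ≠ none := fun h hh hwu => by
      by_cases h₁ : h = s(u, v)
      · simp [hχ₁def, h₁]
      rw [Sym2.eq_swap] at hwu
      rw [hχ₁ h h₁ hwu]
      exact hrest h hh h₁
    obtain ⟨χ', hχ', htotal, hpal', hcard⟩ := ih (lvl w) hlw huw.symm (hk ▸ hlw.le)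
      (hχ₁def ▸ hχ.shift huw hw hv) hrest₁ (hχ₁def ▸ (hpal.update_none _).update_some _ hcP) rfl
    refine ⟨χ', hχ', htotal, hpal', ?_⟩
    have hsub : changedEdges G χ χ' ⊆ insert s(u, v) (changedEdges G χ₁ χ') := by
      refine changedEdges_subset_insert (fun h _ h₁ => ?_) htotal
      by_cases h₂ : h = s(u, w)
      · simp [hχ₁def, h₂, Function.update_of_ne (h₂ ▸ h₁)]
      · exact Or.inl (hχ₁ h h₁ h₂)
    calc #(changedEdges G χ χ') ≤ #(changedEdges G χ₁ χ') + 1 :=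
          (card_le_card hsub).trans (card_insert_le _ _)
      _ ≤ k + 1 := by omega
  · push Not at hconflict
    refine ⟨Function.update χ s(u, v) (some c), hχ.update_mk hconflict hv, fun h hh => ?_,
      hpal.update_some _ hcP, ?_⟩
    · by_cases hf : h = s(u, v)
      · simp [hf]
      · rw [Function.update_of_ne hf]
        exact hrest h hh hf
    · refine (card_le_one.2 fun a ha b hb => ?_).trans (by omega)
      have key : ∀ h ∈ changedEdges G χ (Function.update χ s(u, v) (some c)), h = s(u, v) :=
        fun h hh => by_contra fun hf => (mem_filter.1 hh).2 (Function.update_of_ne hf _ _)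
      rw [key a ha, key b hb]

end Recoloring

theorem statement19_general {V : Type*} [Fintype V] [DecidableEq V]
    (G : SimpleGraph V) [DecidableRel G.Adj] (n : ℕ) (hn : n = Fintype.card V)
    (Δ α : ℕ) (hΔ : ∀ v : V, G.degree v ≤ Δ) (ε : ℝ) (hε : 0 < ε)
    (hG : ArboricityLE G (α : ℝ)) (χ : Sym2 V → Option ℕ)
    (e : Sym2 V) (he : e ∈ G.edgeSet)
    (hproper : IsProperPartialEdgeColoring G χ)
    (hrest : ∀ f ∈ G.edgeSet, f ≠ e → χ f ≠ none)
    (hpalette : ∀ f ∈ G.edgeSet, ∀ c : ℕ, χ f = some c →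
      1 ≤ c ∧ (c : ℝ) ≤ (Δ : ℝ) + (2 + ε) * α) :
    ∃ χ' : Sym2 V → Option ℕ,
      IsProperPartialEdgeColoring G χ' ∧
      (∀ f ∈ G.edgeSet, χ' f ≠ none) ∧
      (∀ f ∈ G.edgeSet, ∀ c : ℕ, χ' f = some c →
        1 ≤ c ∧ (c : ℝ) ≤ (Δ : ℝ) + (2 + ε) * α) ∧
      (G.edgeFinset.filter (fun f => χ' f ≠ χ f)).card ≤ 2 + ⌈Real.logb (1 + ε) n⌉₊ := by
  obtain ⟨u, v, huv, rfl⟩ : ∃ u v, G.Adj u v ∧ e = s(u, v) := by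
    induction e using Sym2.ind with
    | _ u v => exact ⟨u, v, he, rfl⟩
  set D := ⌊(2 + ε) * α⌋₊ + 1
  have hα : (0 : ℝ) < α := one_pos.trans_le (one_le_of_arboricityLE hG huv)
  have hD : (2 + ε) * α ≤ D + 1 := by
    have := Nat.lt_floor_add_one ((2 + ε) * α)
    push_cast [D]
    linarith
  have hpal (c : ℕ) : c ∈ Icc 1 ⌊Δ + (2 + ε) * α⌋₊ ↔ 1 ≤ c ∧ (c : ℝ) ≤ Δ + (2 + ε) * α := by
    rw [mem_Icc, Nat.le_floor_iff (by positivity)]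
  have hP : Δ + D ≤ #(Icc 1 ⌊Δ + (2 + ε) * α⌋₊) + 1 := by
    rw [Nat.card_Icc, add_comm (Δ : ℝ), Nat.floor_add_natCast (by positivity)]
    omega
  obtain ⟨lvl, hlt, hup⟩ := exists_level_of_peel_eq_empty (peel_eq_empty hG hα hε hD)
  obtain ⟨x, y, hxy, hle, hexy⟩ : ∃ x y, G.Adj x y ∧ lvl x ≤ lvl y ∧ s(u, v) = s(x, y) := by
    rcases le_total (lvl u) (lvl v) with h | h
    exacts [⟨u, v, huv, h, rfl⟩, ⟨v, u, huv.symm, h, Sym2.eq_swap⟩]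
  rw [hexy] at hrest
  obtain ⟨χ', hχ', htotal, hpal', hcard⟩ := exists_recoloring lvl hΔ hup hP hxy hle hproper
    hrest fun f hf c hc => (hpal c).2 (hpalette f hf c hc)
  refine ⟨χ', hχ', htotal, fun f hf c hc => (hpal c).1 (hpal' f hf c hc), ?_⟩
  have := hlt x
  rw [← hn] at this
  exact hcard.trans (by omega)

/-- for any `n`-node graph `G` of maximum degree `Δ` and arboricity at
most `α`, any proper partial edge coloring with colors in `[Δ + (2+ε)α]` leaving a
single edge `e` uncolored extends to a proper edge coloring of all of `G` with the
same palette, changing the colors of at most `2 + ⌈log_{1+ε} n⌉` edges. -/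
theorem statement19 {V : Type*} [Fintype V] [DecidableEq V]
    (G : SimpleGraph V) [DecidableRel G.Adj] (n : ℕ) (hn : n = Fintype.card V)
    (Δ α : ℕ) (hΔ : ∀ v : V, G.degree v ≤ Δ) (ε : ℝ) (hε : 0 < ε) (hε1 : ε < 1)
    (hG : ArboricityLE G (α : ℝ)) (χ : Sym2 V → Option ℕ)
    (e : Sym2 V) (he : e ∈ G.edgeSet)
    (hproper : IsProperPartialEdgeColoring G χ)
    (huncol : χ e = none)
    (hrest : ∀ f ∈ G.edgeSet, f ≠ e → χ f ≠ none)
    (hpalette : ∀ f ∈ G.edgeSet, ∀ c : ℕ, χ f = some c →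
      1 ≤ c ∧ (c : ℝ) ≤ (Δ : ℝ) + (2 + ε) * α) :
    ∃ χ' : Sym2 V → Option ℕ,
      IsProperPartialEdgeColoring G χ' ∧
      (∀ f ∈ G.edgeSet, χ' f ≠ none) ∧
      (∀ f ∈ G.edgeSet, ∀ c : ℕ, χ' f = some c →
        1 ≤ c ∧ (c : ℝ) ≤ (Δ : ℝ) + (2 + ε) * α) ∧
      (G.edgeFinset.filter (fun f => χ' f ≠ χ f)).card ≤ 2 + ⌈Real.logb (1 + ε) n⌉₊ :=
  statement19_general G n hn Δ α hΔ ε hε hG χ e he hproper hrest hpalette
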